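/- Let n be a positive integer, let 0 < p_out < p_in < 1, and let θ = η = 0 (no oracle, so S ≡ 0). Under the SSBM-with-oracle joint distribution, for every symmetric 0-1 adjacency matrix a (with zero diagonal) such that Pr(A = a) > 0, the set of maximizers over σ ∈ {−1,1}ⁿ of Pr(σ⁰ = σ | A = a) is equal to the set of minimizers over σ ∈ {−1,1}ⁿ of cut(C₁^σ, a) − τ·|C₁^σ|·(n − |C₁^σ|), where τ := log((1−p_out)/(1−p_in)) / log((p_in(1−p_out))/(p_out(1−p_in))). -/

import Mathlib

/-!
With no oracle the posterior is proportional to the likelihood, whose logarithm is a sum over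
the pairs `i < j` of the log-likelihood of `a i j` under `Bernoulli(p_in)` or `Bernoulli(p_out)`.
Relative to the all-`p_in` baseline, only the pairs separated by `σ` contribute, each one
`L * a i j - log ((1 - p_out) / (1 - p_in))` with
`L = log (p_in (1 - p_out) / (p_out (1 - p_in))) > 0`.
Summed over the `|C₁| (n - |C₁|)` separated pairs this is `L` times the cut objective, so the
log-posterior is a constant minus `L` times the objective.
-/

open Finset

noncomputable section

/-- Probability mass `Pr(σ⁰ = σ, A = a)` of the SSBM (no oracle): the ground truth
`σ⁰ = σ` is uniform on `{−1,1}ⁿ` (encoded by `Bool`) and, given `σ⁰`, the edges are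
independent Bernoulli with parameter `p_in` inside clusters and `p_out` across. -/
def graphMass (n : ℕ) (pin pout : ℝ) (σ : Fin n → Bool)
    (a : Fin n → Fin n → ℕ) : ℝ :=
  (1 / 2) ^ n *
    ∏ p ∈ Finset.univ.filter (fun p : Fin n × Fin n => p.1 < p.2),
      (if a p.1 p.2 = 1 then (if σ p.1 = σ p.2 then pin else pout)
        else (if σ p.1 = σ p.2 then 1 - pin else 1 - pout))

/-- Posterior probability `Pr(σ⁰ = σ | A = a)`, as a ratio of probabilities.
(With `θ = η = 0` the oracle reveals nothing, `S ≡ 0`, so conditioning on the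
graph alone is the same as conditioning on `(A, S)`.) -/
def posteriorGraph (n : ℕ) (pin pout : ℝ) (σ : Fin n → Bool)
    (a : Fin n → Fin n → ℕ) : ℝ :=
  graphMass n pin pout σ a / ∑ σ' : Fin n → Bool, graphMass n pin pout σ' a

/-- `cut(C₁^σ, a) = Σ_{i ∈ C₁^σ, j ∉ C₁^σ} a_{ij}`. -/
def cutVal (n : ℕ) (σ : Fin n → Bool) (a : Fin n → Fin n → ℕ) : ℝ :=
  ∑ i, ∑ j, (if σ i = true ∧ σ j = false then (a i j : ℝ) else 0)

/-- The unsupervised MAP objective `cut(C₁^σ, a) − τ|C₁^σ|(n − |C₁^σ|)`. -/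
def cutObjective (n : ℕ) (τ : ℝ) (σ : Fin n → Bool) (a : Fin n → Fin n → ℕ) : ℝ :=
  cutVal n σ a
    - τ * ((Finset.univ.filter (fun i => σ i = true)).card : ℝ)
        * ((n : ℝ) - ((Finset.univ.filter (fun i => σ i = true)).card : ℝ))

theorem card_filter_true_false {ι : Type*} [Fintype ι] (σ : ι → Bool) :
    (#(univ.filter (fun p : ι × ι => σ p.1 = true ∧ σ p.2 = false)) : ℝ) =
      #(univ.filter (fun i => σ i = true)) *
        (Fintype.card ι - #(univ.filter (fun i => σ i = true))) := by
  have hcompl : #(univ.filter (fun i => σ i = true)) + #(univ.filter (fun i => σ i = false)) =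
      Fintype.card ι := by
    simpa using card_filter_add_card_filter_not (s := univ) (fun i => σ i = true)
  rw [← univ_product_univ, filter_product (fun i => σ i = true) (fun j => σ j = false),
    card_product, ← hcompl]
  push_cast
  ring

/-- A pair `i < j` separated by `σ` is counted once, oriented from its `true` end. -/
theorem sum_filter_lt_ne_eq_sum_filter_true_false {ι M : Type*} [Fintype ι] [LinearOrder ι]
    [AddCommMonoid M] (σ : ι → Bool) (w : ι → ι → M) (hw : ∀ i j, w i j = w j i) :
    ∑ p ∈ univ.filter (fun p : ι × ι => p.1 < p.2 ∧ σ p.1 ≠ σ p.2), w p.1 p.2 =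
      ∑ p ∈ univ.filter (fun p : ι × ι => σ p.1 = true ∧ σ p.2 = false), w p.1 p.2 := by
  refine sum_nbij' (fun p => if σ p.1 then p else p.swap)
    (fun q => if q.1 < q.2 then q else q.swap) ?_ ?_ ?_ ?_ ?_ <;> rintro ⟨i, j⟩ <;> grind

theorem cutVal_eq_sum_filter (n : ℕ) (σ : Fin n → Bool) (a : Fin n → Fin n → ℕ) :
    cutVal n σ a = ∑ p ∈ univ.filter
        (fun p : Fin n × Fin n => σ p.1 = true ∧ σ p.2 = false), (a p.1 p.2 : ℝ) := by
  rw [cutVal, sum_filter, ← Fintype.sum_prod_type']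

theorem sum_filter_true_false_mul_sub_eq_mul_cutObjective (n : ℕ) (L τ : ℝ)
    (σ : Fin n → Bool) (a : Fin n → Fin n → ℕ) :
    ∑ p ∈ univ.filter (fun p : Fin n × Fin n => σ p.1 = true ∧ σ p.2 = false),
        (L * a p.1 p.2 - L * τ) = L * cutObjective n τ σ a := by
  rw [sum_sub_distrib, ← mul_sum, sum_const, nsmul_eq_mul, card_filter_true_false,
    ← cutVal_eq_sum_filter, cutObjective, Fintype.card_fin]
  ring

def edgeLogLik (p : ℝ) (x : ℕ) : ℝ :=
  Real.log (if x = 1 then p else 1 - p)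

theorem edgeLogLik_sub_edgeLogLik {pin pout : ℝ} (hpout : 0 < pout) (hp : pout < pin)
    (hpin : pin < 1) {x : ℕ} (hx : x = 0 ∨ x = 1) :
    edgeLogLik pin x - edgeLogLik pout x =
      Real.log ((pin * (1 - pout)) / (pout * (1 - pin))) * x -
        Real.log ((1 - pout) / (1 - pin)) := by
  have hpin0 : pin ≠ 0 := by linarith
  have hpin1 : 1 - pin ≠ 0 := by linarith
  have hpout1 : 1 - pout ≠ 0 := by linarith
  rcases hx with rfl | rfl
  · simp [edgeLogLik, Real.log_div hpout1 hpin1]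
  · simp only [edgeLogLik, ↓reduceIte, Nat.cast_one, mul_one]
    rw [Real.log_div (mul_ne_zero hpin0 hpout1) (mul_ne_zero hpout.ne' hpin1),
      Real.log_mul hpin0 hpout1, Real.log_mul hpout.ne' hpin1, Real.log_div hpout1 hpin1]
    ring

theorem log_odds_pos {pin pout : ℝ} (hpout : 0 < pout) (hp : pout < pin) (hpin : pin < 1) :
    0 < Real.log ((pin * (1 - pout)) / (pout * (1 - pin))) := by
  apply Real.log_pos
  rw [one_lt_div (by nlinarith)]
  nlinarith

theorem graphMass_factor_pos {pin pout : ℝ} (hpin0 : 0 < pin) (hpin1 : pin < 1)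
    (hpout0 : 0 < pout) (hpout1 : pout < 1) (x : ℕ) (s : Prop) [Decidable s] :
    0 < if x = 1 then (if s then pin else pout) else (if s then 1 - pin else 1 - pout) := by
  split_ifs <;> linarith

theorem graphMass_pos {n : ℕ} {pin pout : ℝ} (hpin0 : 0 < pin) (hpin1 : pin < 1)
    (hpout0 : 0 < pout) (hpout1 : pout < 1) (σ : Fin n → Bool) (a : Fin n → Fin n → ℕ) :
    0 < graphMass n pin pout σ a :=
  mul_pos (by positivity) <| prod_pos fun _ _ =>
    graphMass_factor_pos hpin0 hpin1 hpout0 hpout1 _ _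

theorem log_graphMass {n : ℕ} {pin pout : ℝ} (hpin0 : 0 < pin) (hpin1 : pin < 1)
    (hpout0 : 0 < pout) (hpout1 : pout < 1) (σ : Fin n → Bool) {a : Fin n → Fin n → ℕ}
    (hasym : ∀ i j, a i j = a j i) :
    Real.log (graphMass n pin pout σ a) =
      n * Real.log (1 / 2) +
        ∑ p ∈ univ.filter (fun p : Fin n × Fin n => p.1 < p.2), edgeLogLik pin (a p.1 p.2) -
        ∑ p ∈ univ.filter (fun p : Fin n × Fin n => σ p.1 = true ∧ σ p.2 = false),
          (edgeLogLik pin (a p.1 p.2) - edgeLogLik pout (a p.1 p.2)) := by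
  have hfactor : ∀ p : Fin n × Fin n,
      Real.log (if a p.1 p.2 = 1 then (if σ p.1 = σ p.2 then pin else pout)
          else (if σ p.1 = σ p.2 then 1 - pin else 1 - pout)) =
        edgeLogLik pin (a p.1 p.2) -
          if σ p.1 ≠ σ p.2 then edgeLogLik pin (a p.1 p.2) - edgeLogLik pout (a p.1 p.2)
          else 0 := by
    intro p
    by_cases hs : σ p.1 = σ p.2 <;> by_cases ha : a p.1 p.2 = 1 <;> simp [edgeLogLik, hs, ha]
  rw [graphMass, Real.log_mul (by positivity) (prod_pos fun _ _ =>
      graphMass_factor_pos hpin0 hpin1 hpout0 hpout1 _ _).ne', Real.log_pow,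
    Real.log_prod fun _ _ => (graphMass_factor_pos hpin0 hpin1 hpout0 hpout1 _ _).ne',
    sum_congr rfl fun p _ => hfactor p, sum_sub_distrib, ← sum_filter, filter_filter,
    sum_filter_lt_ne_eq_sum_filter_true_false σ
      (fun i j => edgeLogLik pin (a i j) - edgeLogLik pout (a i j)) (by simp [hasym])]
  ring

theorem exists_log_graphMass_eq_sub_mul_cutObjective {n : ℕ} {pin pout : ℝ}
    (hpout : 0 < pout) (hp : pout < pin) (hpin : pin < 1) {a : Fin n → Fin n → ℕ}
    (ha01 : ∀ i j, a i j = 0 ∨ a i j = 1) (hasym : ∀ i j, a i j = a j i) :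
    ∃ K : ℝ, ∀ σ : Fin n → Bool,
      Real.log (graphMass n pin pout σ a) =
        K - Real.log ((pin * (1 - pout)) / (pout * (1 - pin))) *
          cutObjective n
            (Real.log ((1 - pout) / (1 - pin)) /
              Real.log ((pin * (1 - pout)) / (pout * (1 - pin)))) σ a := by
  set L := Real.log ((pin * (1 - pout)) / (pout * (1 - pin)))
  have hL : L ≠ 0 := (log_odds_pos hpout hp hpin).ne'
  refine ⟨n * Real.log (1 / 2) +
    ∑ p ∈ univ.filter (fun p : Fin n × Fin n => p.1 < p.2), edgeLogLik pin (a p.1 p.2),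
    fun σ => ?_⟩
  rw [log_graphMass (hpout.trans hp) hpin hpout (hp.trans hpin) σ hasym,
    sum_congr rfl fun p _ => edgeLogLik_sub_edgeLogLik hpout hp hpin (ha01 p.1 p.2),
    ← sum_filter_true_false_mul_sub_eq_mul_cutObjective, mul_div_cancel₀ _ hL]

theorem posteriorGraph_le_posteriorGraph_iff {n : ℕ} {pin pout : ℝ} {a : Fin n → Fin n → ℕ}
    (hmass : ∀ σ, 0 < graphMass n pin pout σ a) (σ σ' : Fin n → Bool) :
    posteriorGraph n pin pout σ' a ≤ posteriorGraph n pin pout σ a ↔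
      graphMass n pin pout σ' a ≤ graphMass n pin pout σ a :=
  div_le_div_iff_of_pos_right (sum_pos (fun σ _ => hmass σ) univ_nonempty)

theorem map_estimator_unsupervised_general
    (n : ℕ) (pin pout : ℝ)
    (hpout : 0 < pout) (hp : pout < pin) (hpin : pin < 1)
    (a : Fin n → Fin n → ℕ)
    (ha01 : ∀ i j, a i j = 0 ∨ a i j = 1)
    (hasym : ∀ i j, a i j = a j i) :
    {σ : Fin n → Bool | ∀ σ' : Fin n → Bool,
        posteriorGraph n pin pout σ' a ≤ posteriorGraph n pin pout σ a}
      =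
    {σ : Fin n → Bool | ∀ σ' : Fin n → Bool,
        cutObjective n
            (Real.log ((1 - pout) / (1 - pin)) /
              Real.log ((pin * (1 - pout)) / (pout * (1 - pin))))
            σ a
          ≤ cutObjective n
            (Real.log ((1 - pout) / (1 - pin)) /
              Real.log ((pin * (1 - pout)) / (pout * (1 - pin))))
            σ' a} := by
  obtain ⟨K, hK⟩ := exists_log_graphMass_eq_sub_mul_cutObjective hpout hp hpin ha01 hasym
  have hmass (σ : Fin n → Bool) : 0 < graphMass n pin pout σ a :=
    graphMass_pos (hpout.trans hp) hpin hpout (hp.trans hpin) σ a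
  ext σ
  refine forall_congr' fun σ' => ?_
  rw [posteriorGraph_le_posteriorGraph_iff hmass, ← Real.log_le_log_iff (hmass σ') (hmass σ),
    hK, hK, sub_le_sub_iff_left, mul_le_mul_iff_right₀ (log_odds_pos hpout hp hpin)]

/-- **Theorem 1, unsupervised case (`θ = η = 0`).** The maximizers of
`Pr(σ⁰ = σ | A = a)` are exactly the minimizers of
`cut(C₁^σ, a) − τ|C₁^σ|(n − |C₁^σ|)` over `σ ∈ {−1,1}ⁿ`, with
`τ = log((1−p_out)/(1−p_in)) / log(p_in(1−p_out)/(p_out(1−p_in)))`. -/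
theorem map_estimator_unsupervised
    (n : ℕ) (hn : 0 < n) (pin pout : ℝ)
    (hpout : 0 < pout) (hp : pout < pin) (hpin : pin < 1)
    (a : Fin n → Fin n → ℕ)
    (ha01 : ∀ i j, a i j = 0 ∨ a i j = 1)
    (hasym : ∀ i j, a i j = a j i)
    (hadiag : ∀ i, a i i = 0)
    (hpos : 0 < ∑ σ : Fin n → Bool, graphMass n pin pout σ a) :
    {σ : Fin n → Bool | ∀ σ' : Fin n → Bool,
        posteriorGraph n pin pout σ' a ≤ posteriorGraph n pin pout σ a}
      =
    {σ : Fin n → Bool | ∀ σ' : Fin n → Bool,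
        cutObjective n
            (Real.log ((1 - pout) / (1 - pin)) /
              Real.log ((pin * (1 - pout)) / (pout * (1 - pin))))
            σ a
          ≤ cutObjective n
            (Real.log ((1 - pout) / (1 - pin)) /
              Real.log ((pin * (1 - pout)) / (pout * (1 - pin))))
            σ' a} :=
  map_estimator_unsupervised_general n pin pout hpout hp hpin a ha01 hasym

end
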